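/- Let A, B ∈ F₂[[q]] be odd, let n ∈ ℕ, and let U, V ∈ F₂[[q]] with V odd. Then T_{A,B}^n(U + q^n V) and T_{A,B}^n(U) have opposite parity; that is, the constant coefficients of T_{A,B}^n(U + q^n V) and T_{A,B}^n(U) are distinct. -/

import Mathlib

open PowerSeries
open scoped Classical

/-- Shift map on `F₂[[q]]`: equals `x / q` whenever `q ∣ x`. -/
noncomputable def divq (x : PowerSeries (ZMod 2)) : PowerSeries (ZMod 2) :=
  PowerSeries.mk fun n => PowerSeries.coeff (R := ZMod 2) (n + 1) x

/-- `T_{A,B}(x) = x/q` if `q ∣ x`, and `(A*x + B)/q` otherwise.  (When `A`, `B`, `x` are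
all odd, `A*x + B` is divisible by `q`, so `divq` computes the true quotient there.) -/
noncomputable def Tab (A B x : PowerSeries (ZMod 2)) : PowerSeries (ZMod 2) :=
  if X ∣ x then divq x else divq (A * x + B)

/-!
A perturbation `q^(m+1) V` of the argument does not change whether `q` divides it, so both
arguments take the same branch of `T_{A,B}`; the perturbation becomes `q^m V` or `q^m (A V)`,
again with odd cofactor because `A` is odd. After `n` steps a perturbation `q^n V` has become
an odd series, which flips the parity.
-/

lemma divq_add (x y : PowerSeries (ZMod 2)) : divq (x + y) = divq x + divq y := by
  ext n
  simp [divq]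

lemma divq_X_mul (w : PowerSeries (ZMod 2)) : divq (X * w) = w := by
  ext n
  simp [divq, coeff_succ_X_mul]

lemma Tab_add_X_pow_succ_mul {A : PowerSeries (ZMod 2)} (B : PowerSeries (ZMod 2))
    (hA : constantCoeff A = 1) (m : ℕ) (U : PowerSeries (ZMod 2)) {V : PowerSeries (ZMod 2)}
    (hV : constantCoeff V = 1) :
    ∃ W : PowerSeries (ZMod 2), constantCoeff W = 1 ∧
      Tab A B (U + X ^ (m + 1) * V) = Tab A B U + X ^ m * W := by
  have hX_dvd : (X : PowerSeries (ZMod 2)) ∣ X ^ (m + 1) * V :=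
    (dvd_pow_self _ m.succ_ne_zero).mul_right V
  have hdvd_iff : X ∣ U + X ^ (m + 1) * V ↔ X ∣ U := dvd_add_left hX_dvd
  by_cases hU : (X : PowerSeries (ZMod 2)) ∣ U
  · refine ⟨V, hV, ?_⟩
    rw [Tab, Tab, if_pos (hdvd_iff.mpr hU), if_pos hU, pow_succ', mul_assoc, divq_add,
      divq_X_mul]
  · refine ⟨A * V, by simp [hA, hV], ?_⟩
    have hsplit : A * (U + X ^ (m + 1) * V) + B = (A * U + B) + X * (X ^ m * (A * V)) := by
      ring
    rw [Tab, Tab, if_neg (mt hdvd_iff.mp hU), if_neg hU, hsplit, divq_add, divq_X_mul]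

lemma Tab_iterate_add_X_pow_mul {A : PowerSeries (ZMod 2)} (B : PowerSeries (ZMod 2))
    (hA : constantCoeff A = 1) (m k : ℕ) (U : PowerSeries (ZMod 2)) {V : PowerSeries (ZMod 2)}
    (hV : constantCoeff V = 1) :
    ∃ W : PowerSeries (ZMod 2), constantCoeff W = 1 ∧
      (Tab A B)^[k] (U + X ^ (m + k) * V) = (Tab A B)^[k] U + X ^ m * W := by
  induction k generalizing U V with
  | zero => exact ⟨V, hV, rfl⟩
  | succ k ih =>
    obtain ⟨W, hW, hstep⟩ := Tab_add_X_pow_succ_mul B hA (m + k) U hV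
    rw [Function.iterate_succ_apply, Function.iterate_succ_apply, ← add_assoc, hstep]
    exact ih (Tab A B U) hW

lemma constantCoeff_add_ne_self {x y : PowerSeries (ZMod 2)} (hy : constantCoeff y = 1) :
    constantCoeff (x + y) ≠ constantCoeff x := by
  simp [hy]

theorem Tab_iterate_add_qpow_parity_ne_general (A B : PowerSeries (ZMod 2))
    (hA : PowerSeries.constantCoeff (R := ZMod 2) A = 1)
    (n : ℕ) (U V : PowerSeries (ZMod 2))
    (hV : PowerSeries.constantCoeff (R := ZMod 2) V = 1) :
    PowerSeries.constantCoeff (R := ZMod 2) ((Tab A B)^[n] (U + X ^ n * V)) ≠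
      PowerSeries.constantCoeff (R := ZMod 2) ((Tab A B)^[n] U) := by
  obtain ⟨W, hW, hiter⟩ := Tab_iterate_add_X_pow_mul B hA 0 n U hV
  rw [zero_add, pow_zero, one_mul] at hiter
  rw [hiter]
  exact constantCoeff_add_ne_self hW

/-- For odd `A, B, V` and any `U`, the `n`-th iterates `T_{A,B}^n(U + q^n V)` and
`T_{A,B}^n(U)` have opposite parity. -/
theorem Tab_iterate_add_qpow_parity_ne (A B : PowerSeries (ZMod 2))
    (hA : PowerSeries.constantCoeff (R := ZMod 2) A = 1)
    (hB : PowerSeries.constantCoeff (R := ZMod 2) B = 1)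
    (n : ℕ) (U V : PowerSeries (ZMod 2))
    (hV : PowerSeries.constantCoeff (R := ZMod 2) V = 1) :
    PowerSeries.constantCoeff (R := ZMod 2) ((Tab A B)^[n] (U + X ^ n * V)) ≠
      PowerSeries.constantCoeff (R := ZMod 2) ((Tab A B)^[n] U) :=
  Tab_iterate_add_qpow_parity_ne_general A B hA n U V hV
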